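/- In the quantized matrix algebra D_q(n), for indices with i > s, j > t > k, one has d_{ij}d_{st}d_{sk} = d_{sk}d_{st}d_{ij} + (q−1)d_{st}d_{sj}d_{ik} + (q−1)d_{sj}d_{sk}d_{it} + (q−1)² d_{sj}d_{st}d_{ik} expressed so that both bracketings of the triple product agree (associativity-consistent reduction of the ambiguity D_{ij}D_{st}D_{sk}). -/
import Mathlib


/-- In `D_q(n)`, for indices with `i > s`, `j > t > k`, the reduction of the
ambiguity `D_{ij}D_{st}D_{sk}` is associativity-consistent, and
`d_{ij}d_{st}d_{sk} = d_{sk}d_{st}d_{ij} + (q−1)d_{st}d_{sj}d_{ik}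
 + (q−1)d_{sj}d_{sk}d_{it} + (q−1)² d_{sj}d_{st}d_{ik}`. -/
theorem stmt_5 {K A : Type*} [Field K] [Ring A] [Algebra K A]
    (q : K) (hq : q ≠ 0) (n : ℕ) (d : Fin n → Fin n → A)
    (h1 : ∀ i j s t : Fin n, s < i → j ≤ t → d i j * d s t = q • (d s t * d i j))
    (h2 : ∀ i j s t : Fin n, s < i → t < j →
      d i j * d s t = d s t * d i j + (q - 1) • (d s j * d i t))
    (h3 : ∀ i j k : Fin n, d i j * d i k = d i k * d i j)
    (i s j t k : Fin n) (his : s < i) (hjt : t < j) (htk : k < t) :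
    (d i j * d s t) * d s k = d i j * (d s t * d s k) ∧
    d i j * d s t * d s k
      = d s k * d s t * d i j + (q - 1) • (d s t * d s j * d i k)
        + (q - 1) • (d s j * d s k * d i t)
        + ((q - 1) ^ 2) • (d s j * d s t * d i k) := by
  refine ⟨mul_assoc _ _ _, ?_⟩
  have e1 := h2 i j s t his hjt
  have e2 := h2 i j s k his (htk.trans hjt)
  have e3 := h2 i t s k his htk
  calc d i j * d s t * d s k
      = d s t * (d i j * d s k) + (q - 1) • (d s j * (d i t * d s k)) := by
        rw [e1, add_mul, smul_mul_assoc, mul_assoc, mul_assoc]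
    _ = d s t * (d s k * d i j + (q - 1) • (d s j * d i k))
        + (q - 1) • (d s j * (d s k * d i t + (q - 1) • (d s t * d i k))) := by
        rw [e2, e3]
    _ = _ := by
        simp only [mul_add, smul_add, mul_smul_comm, smul_smul, ← mul_assoc, sq]
        rw [h3 s t k]
        abel
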